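/- Let y_1,...,y_k, z_1,...,z_k be i.i.d. uniform on [0,1] and m > 0. Then E[det({e^{-2πi m y_j z_l}}_{1≤j,l≤k} · ({e^{-2πi m y_j z_l}})*)] = k! · E_Z[det({ (1 - e^{-2πi m (z_j - z_l)}) / (2πi m (z_j - z_l)) }_{1≤j,l≤k})], where the diagonal entries (j=l) are interpreted as 1. -/

import Mathlib

open Matrix MeasureTheory

/-- The random `k×k` matrix with entries `g_{jl} = exp(-2πi m y_j z_l)`. -/
noncomputable def losMatrix (k : ℕ) (m : ℝ) (y z : Fin k → ℝ) :
    Matrix (Fin k) (Fin k) ℂ :=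
  fun j l => Complex.exp (-(2 * Real.pi * m * y j * z l) * Complex.I)

/-- The kernel matrix with entries `(1 - e^{-2πi m (z_j - z_l)})/(2πi m (z_j - z_l))`,
with value `1` when `z_j = z_l`. -/
noncomputable def kernelMatrix (k : ℕ) (m : ℝ) (z : Fin k → ℝ) :
    Matrix (Fin k) (Fin k) ℂ :=
  fun j l => if z j = z l then 1 else
    (1 - Complex.exp (-(2 * Real.pi * m * (z j - z l)) * Complex.I)) /
      (2 * Real.pi * Complex.I * m * (z j - z l))

/-!
Expand `det (G Gᴴ) = det G · conj (det G)` over pairs of permutations `(σ, τ)`. Each term is a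
product over the rows `j` of `e^{-2πi m y_j (z_{σ j} - z_{τ j})}`, so integrating over the cube
in `y` replaces it by `∏ j, K (σ j) (τ j)`, where `K` is the kernel matrix. For fixed `τ` the
sum over `σ` is `sign τ · det (K with columns permuted by τ) = det K`, and the `τ`-sum gives
`k! · det K`. Finally integrate over `z`, swapping the integrals since the integrand is continuous
on a compact set.
-/

open Equiv Finset Complex

namespace Matrix

variable {n R : Type*} [Fintype n] [DecidableEq n] [CommRing R]

theorem sum_perm_sign_mul_sign_mul_prod (K : Matrix n n R) :
    ∑ σ : Perm n, ∑ τ : Perm n, (Perm.sign σ : R) * Perm.sign τ * ∏ j, K (σ j) (τ j)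
      = (Fintype.card n).factorial * K.det := by
  have inner (τ : Perm n) :
      ∑ σ : Perm n, (Perm.sign σ : R) * Perm.sign τ * ∏ j, K (σ j) (τ j) = K.det := by
    have hcol :
        (K.submatrix id τ).det = ∑ σ : Perm n, (Perm.sign σ : R) * ∏ j, K (σ j) (τ j) :=
      det_apply' _
    calc _ = (Perm.sign τ : R) * (K.submatrix id τ).det := by
          rw [hcol, mul_sum]; exact sum_congr rfl fun σ _ => by ring
      _ = K.det := by
          rw [det_permute', ← mul_assoc, ← Int.cast_mul, ← Units.val_mul, Int.units_mul_self,
            Units.val_one, Int.cast_one, one_mul]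
  rw [sum_comm, sum_congr rfl fun τ _ => inner τ, sum_const, card_univ, Fintype.card_perm,
    nsmul_eq_mul]

theorem det_mul_conjTranspose_eq_sum [StarRing R] (M : Matrix n n R) :
    (M * Mᴴ).det = ∑ σ : Perm n, ∑ τ : Perm n,
      (Perm.sign σ : R) * Perm.sign τ * ∏ j, M j (σ j) * star (M j (τ j)) := by
  rw [det_mul, det_conjTranspose, ← det_transpose, det_apply', star_sum, sum_mul_sum]
  refine sum_congr rfl fun σ _ => sum_congr rfl fun τ _ => ?_
  simp only [star_mul', star_intCast, star_prod, transpose_apply, prod_mul_distrib]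
  ring

end Matrix

theorem integral_Icc_pi_prod {ι 𝕜 : Type*} [Fintype ι] [RCLike 𝕜] (a b : ι → ℝ)
    (f : ι → ℝ → 𝕜) :
    ∫ y in Set.Icc a b, ∏ i, f i (y i) = ∏ i, ∫ t in Set.Icc (a i) (b i), f i t := by
  rw [← Set.pi_univ_Icc, volume_pi, Measure.restrict_pi_pi, integral_fintype_prod_eq_prod]

theorem integral_Icc_exp_neg_mul_I (c : ℝ) :
    ∫ t in Set.Icc (0 : ℝ) 1, exp (-(c * t) * I)
      = if c = 0 then 1 else (1 - exp (-c * I)) / (c * I) := by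
  rw [integral_Icc_eq_integral_Ioc, ← intervalIntegral.integral_of_le zero_le_one]
  split_ifs with hc
  · simp [hc]
  · have hcI : -(c : ℂ) * I ≠ 0 := by simp [hc]
    simp_rw [show ∀ t : ℝ, -((c : ℂ) * t) * I = -c * I * t from fun t => by ring]
    rw [integral_exp_mul_complex hcI]
    push_cast
    rw [mul_one, mul_zero, exp_zero, ← neg_div_neg_eq, neg_sub, neg_mul, neg_neg]

variable {k : ℕ} {m : ℝ}

lemma losMatrix_mul_star_apply (y z : Fin k → ℝ) (j l l' : Fin k) :
    losMatrix k m y z j l * star (losMatrix k m y z j l')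
      = exp (-((2 * Real.pi * m * (z l - z l') : ℝ) * y j) * I) := by
  rw [losMatrix, losMatrix, star_def, ← exp_conj, ← exp_add]
  simp only [map_mul, map_neg, conj_ofReal, conj_I, map_ofNat]
  push_cast
  ring_nf

lemma kernelMatrix_apply_eq_integral (hm : m ≠ 0) (z : Fin k → ℝ) (l l' : Fin k) :
    kernelMatrix k m z l l'
      = ∫ t in Set.Icc (0 : ℝ) 1, exp (-((2 * Real.pi * m * (z l - z l') : ℝ) * t) * I) := by
  rw [integral_Icc_exp_neg_mul_I, kernelMatrix]
  simp only [mul_eq_zero, OfNat.ofNat_ne_zero, Real.pi_ne_zero, hm, sub_eq_zero, false_or]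
  split_ifs <;> push_cast <;> ring_nf

lemma continuous_losMatrix :
    Continuous fun p : (Fin k → ℝ) × (Fin k → ℝ) => losMatrix k m p.1 p.2 := by
  unfold losMatrix
  fun_prop

lemma integral_det_losMatrix_mul_conjTranspose (hm : m ≠ 0) (z : Fin k → ℝ) :
    ∫ y in Set.Icc (0 : Fin k → ℝ) 1, (losMatrix k m y z * (losMatrix k m y z)ᴴ).det
      = k.factorial * (kernelMatrix k m z).det := by
  have hint (σ τ : Perm (Fin k)) : IntegrableOn (fun y : Fin k → ℝ =>
      ∏ j, losMatrix k m y z j (σ j) * star (losMatrix k m y z j (τ j))) (Set.Icc 0 1) := by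
    have := (continuous_losMatrix (k := k) (m := m)).comp (Continuous.prodMk_left z)
    exact Continuous.integrableOn_Icc (by fun_prop)
  calc _ = ∑ σ : Perm (Fin k), ∑ τ : Perm (Fin k), (Perm.sign σ : ℂ) * Perm.sign τ *
        ∫ y in Set.Icc (0 : Fin k → ℝ) 1,
          ∏ j, losMatrix k m y z j (σ j) * star (losMatrix k m y z j (τ j)) := by
        simp_rw [det_mul_conjTranspose_eq_sum]
        rw [integral_finsetSum _ fun σ _ =>
          integrable_finsetSum _ fun τ _ => (hint σ τ).const_mul _]
        refine sum_congr rfl fun σ _ => ?_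
        rw [integral_finsetSum _ fun τ _ => (hint σ τ).const_mul _]
        simp_rw [integral_const_mul]
    _ = ∑ σ : Perm (Fin k), ∑ τ : Perm (Fin k), (Perm.sign σ : ℂ) * Perm.sign τ *
        ∏ j, kernelMatrix k m z (σ j) (τ j) := by
        refine sum_congr rfl fun σ _ => sum_congr rfl fun τ _ => ?_
        simp_rw [losMatrix_mul_star_apply]
        rw [integral_Icc_pi_prod 0 1 fun j t =>
          exp (-((2 * Real.pi * m * (z (σ j) - z (τ j)) : ℝ) * t) * I)]
        exact congrArg _ (prod_congr rfl fun j _ => (kernelMatrix_apply_eq_integral hm z _ _).symm)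
    _ = _ := by rw [sum_perm_sign_mul_sign_mul_prod, Fintype.card_fin]

theorem expected_det_eq_factorial_mul_expected_kernel_det (k : ℕ) (m : ℝ) (hm : 0 < m) :
    (∫ y in Set.Icc (0 : Fin k → ℝ) 1, ∫ z in Set.Icc (0 : Fin k → ℝ) 1,
        (losMatrix k m y z * (losMatrix k m y z)ᴴ).det)
      =
    (k.factorial : ℂ) *
      ∫ z in Set.Icc (0 : Fin k → ℝ) 1, (kernelMatrix k m z).det := by
  have hcont : Continuous fun p : (Fin k → ℝ) × (Fin k → ℝ) =>
      (losMatrix k m p.1 p.2 * (losMatrix k m p.1 p.2)ᴴ).det :=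
    (continuous_losMatrix.matrix_mul continuous_losMatrix.matrix_conjTranspose).matrix_det
  have hint : Integrable (Function.uncurry fun y z : Fin k → ℝ =>
      (losMatrix k m y z * (losMatrix k m y z)ᴴ).det)
      ((volume.restrict (Set.Icc (0 : Fin k → ℝ) 1)).prod
        (volume.restrict (Set.Icc (0 : Fin k → ℝ) 1))) := by
    rw [Measure.prod_restrict]
    exact hcont.continuousOn.integrableOn_compact (isCompact_Icc.prod isCompact_Icc)
  rw [integral_integral_swap hint, ← integral_const_mul]
  simp_rw [integral_det_losMatrix_mul_conjTranspose hm.ne']
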